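/- arXiv:math/0009099 — 6 statements merged into one kernel-verified Lean document; each statement's English description precedes it below -/
import Mathlib

section
/- Let X be a topological space, G a groupoid on X, and H a wide subgroupoid of G. Let V = {V_x : x ∈ X} be an open cover of X with x ∈ V_x, and let H_V be the wide subgroupoid of G generated by the restrictions H|V_x for all x ∈ X. Then for every x ∈ X, the transitivity component M_{x,V} of x in H_V is relatively open in the transitivity component M_x of x in H. (Here relatively open means: every y ∈ M_{x,V} has an open neighbourhood U in X with U ∩ M_x ⊆ M_{x,V}.) -/
open CategoryTheory TopologicalSpace

namespace LocalSubgroupoid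

variable {X : Type*} [Groupoid X]

/-- The restriction `H|V` of a subgroupoid: morphisms of `H` with source and target in `V`. -/
def restrict (H : Subgroupoid X) (V : Set X) : Subgroupoid X where
  arrows x y := {f | x ∈ V ∧ y ∈ V ∧ f ∈ H.arrows x y}
  inv := fun h => ⟨h.2.1, h.1, H.inv h.2.2⟩
  mul := fun {c d e p} hp {q} hq => ⟨hp.1, hq.2.1, H.mul hp.2.2 hq.2.2⟩

/-- The full subgroupoid `G|U` on a set of objects `U`. -/
def full (U : Set X) : Subgroupoid X := restrict ⊤ U

/-- `H` is a wide subgroupoid of `G|U`: all its morphisms lie over `U`, and it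
contains the identities at every point of `U`. -/
def IsWideOn (H : Subgroupoid X) (U : Set X) : Prop :=
  (∀ x ∈ U, 𝟙 x ∈ H.arrows x x) ∧ H ≤ full U

/-- The wide subgroupoid generated by a family of arrows: the smallest wide
subgroupoid containing them. -/
def wideGenerated (S : ∀ c d : X, Set (c ⟶ d)) : Subgroupoid X :=
  sInf {K : Subgroupoid X | K.IsWide ∧ ∀ c d, S c d ⊆ K.arrows c d}

/-- The wide subgroupoid generated by a family of subgroupoids. -/
def wideGeneratedFamily {ι : Sort*} (H : ι → Subgroupoid X) : Subgroupoid X :=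
  wideGenerated (fun c d => ⋃ i, (H i).arrows c d)

/-- The transitivity component of `x` in the subgroupoid `H`. -/
def component (H : Subgroupoid X) (x : X) : Set X :=
  {y | (H.arrows y x).Nonempty}

theorem le_wideGeneratedFamily {ι : Sort*} (H : ι → Subgroupoid X) (i : ι) (c d : X)
    (f : c ⟶ d) (hf : f ∈ (H i).arrows c d) :
    f ∈ (wideGeneratedFamily H).arrows c d := by
  rw [wideGeneratedFamily, wideGenerated, Subgroupoid.mem_sInf_arrows]
  exact fun S hS => hS.2 c d (Set.mem_iUnion.2 ⟨i, hf⟩)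

theorem wideGeneratedFamily_le {ι : Sort*} (H : ι → Subgroupoid X) (K : Subgroupoid X)
    (hK : K.IsWide) (h : ∀ i c d, (H i).arrows c d ⊆ K.arrows c d) {c d : X} {f : c ⟶ d}
    (hf : f ∈ (wideGeneratedFamily H).arrows c d) : f ∈ K.arrows c d := by
  rw [wideGeneratedFamily, wideGenerated, Subgroupoid.mem_sInf_arrows] at hf
  exact hf K ⟨hK, fun c d p hp => by
    obtain ⟨i, hi⟩ := Set.mem_iUnion.1 hp
    exact h i c d hi⟩

end LocalSubgroupoid


open LocalSubgroupoid in
/-- The transitivity components of `H_V` are relatively open in those of `H`. -/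
theorem stmt7 {X : Type*} [TopologicalSpace X] [Groupoid X]
    (H : CategoryTheory.Subgroupoid X) (hH : H.IsWide)
    (V : X → Set X) (hVo : ∀ x, IsOpen (V x)) (hVx : ∀ x, x ∈ V x) :
    ∀ x y : X, y ∈ component (wideGeneratedFamily (fun a => restrict H (V a))) x →
      ∃ U : Set X, IsOpen U ∧ y ∈ U ∧
        U ∩ component H x ⊆ component (wideGeneratedFamily (fun a => restrict H (V a))) x := by
  intro x y hy
  obtain ⟨h, hh⟩ := hy
  refine ⟨V y, hVo y, hVx y, ?_⟩
  rintro z ⟨hzV, f, hf⟩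
  -- h : y ⟶ x in H_V; view it in H
  have hhH : h ∈ H.arrows y x :=
    wideGeneratedFamily_le (fun a => restrict H (V a)) H hH (fun a c d p hp => hp.2.2) hh
  -- g : z ⟶ y in H with endpoints in V y
  have hg : f ≫ Groupoid.inv h ∈ H.arrows z y := H.mul hf (H.inv hhH)
  have hgK : f ≫ Groupoid.inv h ∈
      (wideGeneratedFamily (fun a => restrict H (V a))).arrows z y :=
    le_wideGeneratedFamily _ y _ _ _ ⟨hzV, hVx y, hg⟩
  exact ⟨(f ≫ Groupoid.inv h) ≫ h,
    (wideGeneratedFamily (fun a => restrict H (V a))).mul hgK hh⟩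
end

section
/- Let X be a topological space, G a groupoid on X, H a wide subgroupoid of G, V = {V_x : x ∈ X} an open cover with x ∈ V_x, and H_V the wide subgroupoid generated by the H|V_x. Then for every x ∈ X, the transitivity component M_{x,V} of x in H_V is relatively closed in the transitivity component M_x of x in H, with respect to the subspace topology of M_x in X. -/
open CategoryTheory TopologicalSpace

open LocalSubgroupoid in
/-- The transitivity components of `H_V` are relatively closed in those of `H`. -/
theorem stmt8 {X : Type*} [TopologicalSpace X] [Groupoid X]
    (H : CategoryTheory.Subgroupoid X) (hH : H.IsWide)
    (V : X → Set X) (hVo : ∀ x, IsOpen (V x)) (hVx : ∀ x, x ∈ V x) :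
    ∀ x z : X, z ∈ component H x →
      (∀ U : Set X, IsOpen U → z ∈ U →
        (U ∩ component (wideGeneratedFamily (fun a => restrict H (V a))) x).Nonempty) →
      z ∈ component (wideGeneratedFamily (fun a => restrict H (V a))) x := by
  intro x z hz hU
  obtain ⟨y, hyV, g, hg⟩ := hU (V z) (hVo z) (hVx z)
  -- H_V ≤ H
  set HV := wideGeneratedFamily (fun a => restrict H (V a)) with hHV
  have hle : HV ≤ H := by
    apply sInf_le
    refine ⟨hH, fun c d f hf => ?_⟩
    obtain ⟨_, ⟨a, rfl⟩, hfa⟩ := hf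
    exact hfa.2.2
  -- arrow y ⟶ x in H
  have hgH : g ∈ H.arrows y x := hle (show (⟨y, x, g⟩ : Σ c d : X, c ⟶ d) ∈ HV from hg)
  obtain ⟨f, hf⟩ := hz
  -- arrow z ⟶ y in H: f ≫ inv g
  have hfy : f ≫ CategoryTheory.Groupoid.inv g ∈ H.arrows z y :=
    H.mul hf (H.inv hgH)
  -- this arrow lies in restrict H (V z)
  have hmem : f ≫ CategoryTheory.Groupoid.inv g ∈ HV.arrows z y := by
    refine CategoryTheory.Subgroupoid.mem_sInf_arrows.mpr fun K hK => ?_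
    exact hK.2 z y (Set.mem_iUnion.mpr ⟨z, hVx z, hyV, hfy⟩)
  exact ⟨_, HV.mul hmem hg⟩
end

section
/- Let X be a topological space, G a groupoid on X, and H a wide subgroupoid of G such that every transitivity component of H is a connected subspace of X. Then for every open cover V = {V_x : x ∈ X} with x ∈ V_x, the wide subgroupoid H_V generated by the restrictions H|V_x satisfies: H_V and H have the same transitivity components, i.e. for all x, y ∈ X, H(x,y) ≠ ∅ implies H_V(x,y) ≠ ∅. -/
open CategoryTheory TopologicalSpace

open LocalSubgroupoid in
/-- If every transitivity component of `H` is connected, then for every open cover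
`{V_x}` with `x ∈ V_x`, the generated subgroupoid `H_V` has the same transitivity
components as `H`. -/
theorem stmt9 {X : Type*} [TopologicalSpace X] [Groupoid X]
    (H : CategoryTheory.Subgroupoid X) (hH : H.IsWide)
    (hconn : ∀ x : X, IsConnected (component H x))
    (V : X → Set X) (hVo : ∀ x, IsOpen (V x)) (hVx : ∀ x, x ∈ V x) :
    ∀ x : X, component (wideGeneratedFamily (fun a => restrict H (V a))) x
      = component H x := by
  intro x
  set K := wideGeneratedFamily (fun a => restrict H (V a)) with hK
  -- K is wide
  have hKwide : ∀ c : X, 𝟙 c ∈ K.arrows c c := by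
    intro c
    rw [hK, wideGeneratedFamily, wideGenerated, Subgroupoid.mem_sInf_arrows]
    exact fun S hS => hS.1.wide c
  -- restrictions are contained in K
  have hres : ∀ (a c d : X) (f : c ⟶ d), f ∈ (restrict H (V a)).arrows c d →
      f ∈ K.arrows c d := by
    intro a c d f hf
    rw [hK, wideGeneratedFamily, wideGenerated, Subgroupoid.mem_sInf_arrows]
    intro S hS
    exact hS.2 c d (Set.mem_iUnion.2 ⟨a, hf⟩)
  -- K ≤ H
  have hKH : ∀ (c d : X) (f : c ⟶ d), f ∈ K.arrows c d → f ∈ H.arrows c d := by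
    intro c d f hf
    rw [hK, wideGeneratedFamily, wideGenerated, Subgroupoid.mem_sInf_arrows] at hf
    exact hf H ⟨hH, fun c d g hg => by
      obtain ⟨a, hg⟩ := Set.mem_iUnion.1 hg; exact hg.2.2⟩
  have hsub : component K x ⊆ component H x := by
    rintro y ⟨f, hf⟩
    exact ⟨f, hKH _ _ f hf⟩
  -- key step lemma: from z ∈ V y, H-arrows z→x and y→x, and y→x in K, get z→x in K
  have key : ∀ y z : X, z ∈ V y → (H.arrows z x).Nonempty → (H.arrows y x).Nonempty →
      (K.arrows y x).Nonempty → (K.arrows z x).Nonempty := by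
    rintro y z hz ⟨f, hf⟩ ⟨g, hg⟩ ⟨k, hk⟩
    have harr : f ≫ Groupoid.inv g ∈ H.arrows z y := H.mul hf (H.inv hg)
    have hres' : f ≫ Groupoid.inv g ∈ K.arrows z y :=
      hres y z y _ ⟨hz, hVx y, harr⟩
    exact ⟨(f ≫ Groupoid.inv g) ≫ k, K.mul hres' hk⟩
  have key2 : ∀ y z : X, z ∈ V y → (H.arrows z x).Nonempty → (H.arrows y x).Nonempty →
      (K.arrows z x).Nonempty → (K.arrows y x).Nonempty := by
    rintro y z hz ⟨f, hf⟩ ⟨g, hg⟩ ⟨k, hk⟩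
    have harr : g ≫ Groupoid.inv f ∈ H.arrows y z := H.mul hg (H.inv hf)
    have hres' : g ≫ Groupoid.inv f ∈ K.arrows y z :=
      hres y y z _ ⟨hVx y, hz, harr⟩
    exact ⟨(g ≫ Groupoid.inv f) ≫ k, K.mul hres' hk⟩
  -- pass to the subtype
  haveI : PreconnectedSpace (component H x) :=
    Subtype.preconnectedSpace (hconn x).isPreconnected
  set A : Set (component H x) := {y | (y : X) ∈ component K x} with hA
  have hAopen : IsOpen A := by
    rw [isOpen_iff_forall_mem_open]
    rintro ⟨y, hy⟩ hyA
    refine ⟨Subtype.val ⁻¹' V y, ?_, (hVo y).preimage continuous_subtype_val, hVx y⟩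
    rintro ⟨z, hz⟩ hzV
    exact key y z hzV hz hy hyA
  have hAclosed : IsClosed A := by
    rw [← isOpen_compl_iff, isOpen_iff_forall_mem_open]
    rintro ⟨y, hy⟩ hyA
    refine ⟨Subtype.val ⁻¹' V y, ?_, (hVo y).preimage continuous_subtype_val, hVx y⟩
    rintro ⟨z, hz⟩ hzV hzA
    exact hyA (key2 y z hzV hz hy hzA)
  have hAne : A.Nonempty := ⟨⟨x, ⟨𝟙 x, hH.wide x⟩⟩, ⟨𝟙 x, hKwide x⟩⟩
  have : A = Set.univ := IsClopen.eq_univ ⟨hAclosed, hAopen⟩ hAne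
  apply Set.Subset.antisymm hsub
  intro y hy
  have := Set.eq_univ_iff_forall.1 this ⟨y, hy⟩
  exact this
end

section
/- Let X be a topological space, G a groupoid on X, and H a wide subgroupoid of G. If every transitivity component of H is closed in X, and for every open cover W of X the subgroupoid generated by the restrictions {H|W : W ∈ W} has the same transitivity components as H, then every transitivity component of H is connected. -/
open CategoryTheory TopologicalSpace

namespace LocalSubgroupoid

variable {X : Type*} [Groupoid X]

/-- Auxiliary subgroupoid: arrows of `H` preserving membership in `A` and `B`. -/
def sepSub (H : Subgroupoid X) (A B : Set X) : Subgroupoid X where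
  arrows a b := {f | f ∈ H.arrows a b ∧ (a ∈ A ↔ b ∈ A) ∧ (a ∈ B ↔ b ∈ B)}
  inv := fun h => ⟨H.inv h.1, h.2.1.symm, h.2.2.symm⟩
  mul := fun {c d e p} hp {q} hq => ⟨H.mul hp.1 hq.1, hp.2.1.trans hq.2.1, hp.2.2.trans hq.2.2⟩

theorem mem_component_iff_of_arrow {H : Subgroupoid X} {x c d : X} {f : c ⟶ d}
    (hf : f ∈ H.arrows c d) : c ∈ component H x ↔ d ∈ component H x := by
  constructor
  · rintro ⟨g, hg⟩
    exact ⟨Groupoid.inv f ≫ g, H.mul (H.inv hf) hg⟩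
  · rintro ⟨g, hg⟩
    exact ⟨f ≫ g, H.mul hf hg⟩

end LocalSubgroupoid

open LocalSubgroupoid in
/-- (Contrapositive form.) If every transitivity component of a wide subgroupoid `H`
is closed in `X`, and for every open cover `𝒲` the subgroupoid generated by the
restrictions `H|W`, `W ∈ 𝒲`, has the same transitivity components as `H`, then every
transitivity component of `H` is connected. -/
theorem stmt10 {X : Type*} [TopologicalSpace X] [Groupoid X]
    (H : CategoryTheory.Subgroupoid X) (hH : H.IsWide)
    (hclosed : ∀ x : X, IsClosed (component H x))
    (hgen : ∀ 𝒲 : Set (Set X), (∀ W ∈ 𝒲, IsOpen W) → ⋃₀ 𝒲 = Set.univ →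
      ∀ x : X, component (wideGeneratedFamily (fun W : 𝒲 => restrict H (W : Set X))) x
        = component H x) :
    ∀ x : X, IsConnected (component H x) := by
  intro x
  set M := component H x with hMdef
  have hxM : x ∈ M := ⟨𝟙 x, hH.wide x⟩
  refine ⟨⟨x, hxM⟩, ?_⟩
  rintro U V hU hV hcover ⟨u, huM, huU⟩ ⟨v, hvM, hvV⟩
  by_contra hne
  have hempty : M ∩ (U ∩ V) = ∅ := Set.not_nonempty_iff_eq_empty.mp hne
  -- the cover
  set 𝒲 : Set (Set X) := {U, V, Mᶜ} with h𝒲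
  have hopen : ∀ W ∈ 𝒲, IsOpen W := by
    rintro W (rfl | rfl | rfl)
    · exact hU
    · exact hV
    · exact (hclosed x).isOpen_compl
  have hcov : ⋃₀ 𝒲 = Set.univ := by
    apply Set.eq_univ_of_forall
    intro y
    by_cases hy : y ∈ M
    · rcases hcover hy with h | h
      · exact ⟨U, by simp [h𝒲], h⟩
      · exact ⟨V, by simp [h𝒲], h⟩
    · exact ⟨Mᶜ, by simp [h𝒲], hy⟩
  -- the separating subgroupoid contains all restrictions
  set K := sepSub H (M ∩ U) (M ∩ V) with hK
  have hUVdisj : ∀ y, y ∈ U → y ∉ M ∩ V := by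
    rintro y hyU ⟨hyM, hyV⟩
    have h' : y ∈ M ∩ (U ∩ V) := ⟨hyM, hyU, hyV⟩
    rw [hempty] at h'
    exact h'
  have hVUdisj : ∀ y, y ∈ V → y ∉ M ∩ U := by
    rintro y hyV ⟨hyM, hyU⟩
    have h' : y ∈ M ∩ (U ∩ V) := ⟨hyM, hyU, hyV⟩
    rw [hempty] at h'
    exact h'
  have hle : wideGeneratedFamily (fun W : 𝒲 => restrict H (W : Set X)) ≤ K := by
    apply sInf_le
    refine ⟨⟨fun c => ⟨hH.wide c, Iff.rfl, Iff.rfl⟩⟩, ?_⟩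
    intro c d f hf
    rw [Set.mem_iUnion] at hf
    obtain ⟨⟨W, hW⟩, hcW, hdW, hfH⟩ := hf
    have hMiff : c ∈ M ↔ d ∈ M := mem_component_iff_of_arrow hfH
    rcases hW with rfl | rfl | rfl
    · exact ⟨hfH, ⟨fun h => ⟨hMiff.mp h.1, hdW⟩, fun h => ⟨hMiff.mpr h.1, hcW⟩⟩,
        ⟨fun h => absurd h (hUVdisj c hcW), fun h => absurd h (hUVdisj d hdW)⟩⟩
    · exact ⟨hfH, ⟨fun h => absurd h (hVUdisj c hcW), fun h => absurd h (hVUdisj d hdW)⟩,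
        ⟨fun h => ⟨hMiff.mp h.1, hdW⟩, fun h => ⟨hMiff.mpr h.1, hcW⟩⟩⟩
    · exact ⟨hfH, ⟨fun h => absurd h.1 hcW, fun h => absurd h.1 hdW⟩,
        ⟨fun h => absurd h.1 hcW, fun h => absurd h.1 hdW⟩⟩
  -- v is in the generated component of u
  have hcomp := hgen 𝒲 hopen hcov u
  have hvMu : v ∈ component H u := by
    obtain ⟨g, hg⟩ := hvM
    obtain ⟨g', hg'⟩ := huM
    exact ⟨g ≫ Groupoid.inv g', H.mul hg (H.inv hg')⟩
  rw [← hcomp] at hvMu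
  obtain ⟨f, hf⟩ := hvMu
  have hfK := (CategoryTheory.Subgroupoid.le_iff _ _).mp hle hf
  have : v ∈ M ∩ U := hfK.2.1.mpr ⟨huM, huU⟩
  exact hUVdisj v this.2 ⟨hvM, hvV⟩
end

section
/- Let s be a local subgroupoid of a groupoid G on a topological space X. If s is globally coherent (s = loc(glob(s))) and totally coherent (s|U is coherent for every open U ⊆ X), then for every open U ⊆ X, the restriction s|U is globally coherent: s|U = loc(glob(s|U)). -/
open CategoryTheory TopologicalSpace

namespace LocalSubgroupoid

variable {X : Type*} [TopologicalSpace X] [Groupoid X]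

/-- An atlas for a local subgroupoid of a groupoid on the space `X`: an open cover
`{Uᵢ}`, wide subgroupoids `Hᵢ` of `G|Uᵢ`, with compatible germs. -/
structure Atlas (X : Type*) [TopologicalSpace X] [Groupoid X] where
  ι : Type
  U : ι → Set X
  H : ι → Subgroupoid X
  isOpen : ∀ i, IsOpen (U i)
  covers : ∀ x : X, ∃ i, x ∈ U i
  wide : ∀ i, IsWideOn (H i) (U i)
  compat : ∀ i j, ∀ x ∈ U i ∩ U j, ∃ W : Set X, IsOpen W ∧ x ∈ W ∧ W ⊆ U i ∩ U j ∧
    restrict (H i) W = restrict (H j) W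

/-- `s ≤ loc K` for the local subgroupoid `s` given by an atlas: at each point the
germ of the atlas is dominated by the germ of `K`. -/
def leLoc (A : Atlas X) (K : Subgroupoid X) : Prop :=
  ∀ x : X, ∃ i, x ∈ A.U i ∧ ∃ W : Set X, IsOpen W ∧ x ∈ W ∧ W ⊆ A.U i ∧
    restrict (A.H i) W ≤ restrict K W

/-- `glob s`: the intersection of all wide subgroupoids `K` of `G` with `s ≤ loc K`. -/
def glob (A : Atlas X) : Subgroupoid X :=
  sInf {K : Subgroupoid X | K.IsWide ∧ leLoc A K}

/-- `B` refines `A`: each chart of `B` is a restriction of a chart of `A`. -/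
def Refines (B A : Atlas X) : Prop :=
  ∀ j : B.ι, ∃ i : A.ι, B.U j ⊆ A.U i ∧ B.H j = restrict (A.H i) (B.U j)

end LocalSubgroupoid

namespace LocalSubgroupoid

variable {X : Type*} [TopologicalSpace X] [Groupoid X]

/-- `s ≤ loc K` over the open set `Ω`, for the local subgroupoid `s` of `G|Ω` given
by the chart data `(Us, Hs)`. -/
def leLocOn (Ω : Set X) {ι : Type*} (Us : ι → Set X) (Hs : ι → Subgroupoid X)
    (K : Subgroupoid X) : Prop :=
  ∀ x ∈ Ω, ∃ i, x ∈ Us i ∧ ∃ W : Set X, IsOpen W ∧ x ∈ W ∧ W ⊆ Us i ∧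
    restrict (Hs i) W ≤ restrict K W

/-- `glob` of the local subgroupoid of `G|Ω` given by the chart data `(Us, Hs)`. -/
def globOn (Ω : Set X) {ι : Type*} (Us : ι → Set X) (Hs : ι → Subgroupoid X) :
    Subgroupoid X :=
  sInf {K : Subgroupoid X | IsWideOn K Ω ∧ leLocOn Ω Us Hs K}

/-- Coherence over `Ω`: `s ≤ loc (glob s)` as local subgroupoids of `G|Ω`. -/
def coherentOn (Ω : Set X) {ι : Type*} (Us : ι → Set X) (Hs : ι → Subgroupoid X) :
    Prop :=
  leLocOn Ω Us Hs (globOn Ω Us Hs)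

/-- Global coherence over `Ω`: `s = loc (glob s)`, i.e. germwise equality. -/
def germEqOn (Ω : Set X) {ι : Type*} (Us : ι → Set X) (Hs : ι → Subgroupoid X) :
    Prop :=
  ∀ x ∈ Ω, ∃ i, x ∈ Us i ∧ ∃ W : Set X, IsOpen W ∧ x ∈ W ∧ W ⊆ Us i ∧
    restrict (Hs i) W = restrict (globOn Ω Us Hs) W

end LocalSubgroupoid

open LocalSubgroupoid in
/-- If `s` is globally coherent and totally coherent, then for every open `U ⊆ X`
the restriction `s|U` is globally coherent: `s|U = loc (glob (s|U))`. -/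
theorem stmt17 {X : Type*} [TopologicalSpace X] [Groupoid X] (A : Atlas X)
    (hglobal : germEqOn Set.univ A.U A.H)
    (htotal : ∀ U : Set X, IsOpen U →
      coherentOn U (fun i => A.U i ∩ U) (fun i => restrict (A.H i) (A.U i ∩ U))) :
    ∀ U : Set X, IsOpen U →
      germEqOn U (fun i => A.U i ∩ U) (fun i => restrict (A.H i) (A.U i ∩ U)) := by
  intro U hU x hxU
  -- key: glob(s|U) ≤ (glob s)|U
  have hkey : globOn U (fun i => A.U i ∩ U) (fun i => restrict (A.H i) (A.U i ∩ U)) ≤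
      restrict (globOn Set.univ A.U A.H) U := by
    apply sInf_le (α := Subgroupoid X)
    constructor
    · constructor
      · intro y hyU
        exact ⟨hyU, hyU, by
          rw [globOn, Subgroupoid.mem_sInf_arrows]
          intro K hK
          exact hK.1.1 y trivial⟩
      · rw [Subgroupoid.le_iff]
        rintro c d f ⟨hc, hd, _⟩
        exact ⟨hc, hd, trivial⟩
    · intro y hyU
      obtain ⟨i, hyi, W, hWo, hyW, hWsub, heq⟩ := hglobal y trivial
      refine ⟨i, ⟨hyi, hyU⟩, W ∩ U, hWo.inter hU, ⟨hyW, hyU⟩,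
        fun z hz => ⟨hWsub hz.1, hz.2⟩, ?_⟩
      rw [Subgroupoid.le_iff]
      rintro c d f ⟨hc, hd, _, _, hf⟩
      have hf' : f ∈ (restrict (A.H i) W).arrows c d := ⟨hc.1, hd.1, hf⟩
      rw [heq] at hf'
      exact ⟨hc, hd, hc.2, hd.2, hf'.2.2⟩
  obtain ⟨i₀, hxi₀, W₀, hW₀o, hxW₀, hW₀sub, heq₀⟩ := hglobal x trivial
  obtain ⟨i₁, hxi₁, W₁, hW₁o, hxW₁, hW₁sub, hle₁⟩ := htotal U hU x hxU
  obtain ⟨W₂, hW₂o, hxW₂, hW₂sub, hcompat⟩ := A.compat i₀ i₁ x ⟨hxi₀, hxi₁.1⟩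
  refine ⟨i₁, hxi₁, W₀ ∩ W₁ ∩ W₂, (hW₀o.inter hW₁o).inter hW₂o,
    ⟨⟨hxW₀, hxW₁⟩, hxW₂⟩, fun z hz => hW₁sub hz.1.2, ?_⟩
  apply le_antisymm
  · rw [Subgroupoid.le_iff]
    rintro c d f ⟨hc, hd, hf⟩
    have : f ∈ (restrict (globOn U (fun i => A.U i ∩ U)
        (fun i => restrict (A.H i) (A.U i ∩ U))) W₁).arrows c d :=
      (Subgroupoid.le_iff _ _).mp hle₁ ⟨hc.1.2, hd.1.2, hf⟩
    exact ⟨hc, hd, this.2.2⟩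
  · rw [Subgroupoid.le_iff]
    rintro c d f ⟨hc, hd, hf⟩
    have hf' : f ∈ (restrict (globOn Set.univ A.U A.H) U).arrows c d :=
      (Subgroupoid.le_iff _ _).mp hkey hf
    have h0 : f ∈ (restrict (A.H i₀) W₀).arrows c d := by
      rw [heq₀]
      exact ⟨hc.1.1, hd.1.1, hf'.2.2⟩
    have h1 : f ∈ (restrict (A.H i₁) W₂).arrows c d := by
      rw [← hcompat]
      exact ⟨hc.2, hd.2, h0.2.2⟩
    exact ⟨hc, hd, hW₁sub hc.1.2, hW₁sub hd.1.2, h1.2.2⟩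
end

section
/- Let s be a coherent local subgroupoid of a groupoid G on a topological space X, with atlas {(U_a, H_a) : a ∈ X}, and let H = glob(s). Then every transitivity component M of H is open in the topology X^s: for each a ∈ M there is an open neighbourhood W_a ⊆ U_a of a with H_a|W_a ⊆ H|W_a, and M = ⋃_{a ∈ M} (M_{a,a} ∩ W_a), a union of X^s-open sets. -/
open CategoryTheory TopologicalSpace

namespace LocalSubgroupoid

variable {X : Type*} [TopologicalSpace X] [Groupoid X]

/-- The topology `X^s`: generated by the open sets of `X` together with all
transitivity components of the chart subgroupoids `H_a`. -/
def sTop (Us : X → Set X) (Hs : X → Subgroupoid X) : TopologicalSpace X :=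
  TopologicalSpace.generateFrom
    ({U : Set X | IsOpen U} ∪ {M : Set X | ∃ a x : X, x ∈ Us a ∧ M = component (Hs a) x})

end LocalSubgroupoid

open LocalSubgroupoid in
/-- If `s` is a coherent local subgroupoid of `G` and `H = glob s`, then every
transitivity component `M` of `H` is open in `X^s`: there are open `W_a ⊆ U_a` with
`a ∈ W_a` and `H_a|W_a ⊆ H|W_a`, and `M = ⋃_{a ∈ M} (M_{a,a} ∩ W_a)`. -/
theorem stmt19 {X : Type*} [TopologicalSpace X] [Groupoid X]
    (Us : X → Set X) (Hs : X → CategoryTheory.Subgroupoid X)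
    (hopen : ∀ a, IsOpen (Us a)) (hmem : ∀ a, a ∈ Us a)
    (hwide : ∀ a, IsWideOn (Hs a) (Us a))
    (hcompat : ∀ a b, ∀ x ∈ Us a ∩ Us b, ∃ W : Set X, IsOpen W ∧ x ∈ W ∧
      W ⊆ Us a ∩ Us b ∧ restrict (Hs a) W = restrict (Hs b) W)
    (hcoh : ∀ a : X, ∃ W : Set X, IsOpen W ∧ a ∈ W ∧ W ⊆ Us a ∧
      restrict (Hs a) W ≤ restrict (globOn Set.univ Us Hs) W) :
    ∀ x₀ : X, ∃ W : X → Set X,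
      (∀ a : X, IsOpen (W a) ∧ a ∈ W a ∧ W a ⊆ Us a ∧
        restrict (Hs a) (W a) ≤ restrict (globOn Set.univ Us Hs) (W a)) ∧
      (component (globOn Set.univ Us Hs) x₀ =
        ⋃ a ∈ component (globOn Set.univ Us Hs) x₀, (component (Hs a) a ∩ W a)) ∧
      @IsOpen X (sTop Us Hs) (component (globOn Set.univ Us Hs) x₀) := by
  intro x₀
  choose W hWopen hWmem hWsub hWle using hcoh
  have hset : component (globOn Set.univ Us Hs) x₀ =
      ⋃ a ∈ component (globOn Set.univ Us Hs) x₀, (component (Hs a) a ∩ W a) := by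
    ext y
    simp only [Set.mem_iUnion, Set.mem_inter_iff, exists_prop]
    constructor
    · intro hy
      exact ⟨y, hy, ⟨𝟙 y, (hwide y).1 y (hmem y)⟩, hWmem y⟩
    · rintro ⟨a, ⟨g, hg⟩, ⟨f, hf⟩, hyW⟩
      have hmem' : f ∈ (restrict (Hs a) (W a)).arrows y a := ⟨hyW, hWmem a, hf⟩
      have : f ∈ (restrict (globOn Set.univ Us Hs) (W a)).arrows y a :=
        (CategoryTheory.Subgroupoid.le_iff _ _).mp (hWle a) hmem'
      exact ⟨f ≫ g, CategoryTheory.Subgroupoid.mul _ this.2.2 hg⟩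
  refine ⟨W, fun a => ⟨hWopen a, hWmem a, hWsub a, hWle a⟩, hset, ?_⟩
  rw [hset]
  refine @isOpen_biUnion X X (sTop Us Hs) _ _ fun a _ => ?_
  exact TopologicalSpace.GenerateOpen.inter _ _
    (TopologicalSpace.GenerateOpen.basic _ (Or.inr ⟨a, a, hmem a, rfl⟩))
    (TopologicalSpace.GenerateOpen.basic _ (Or.inl (hWopen a)))
end
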